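/- Assume the boundary conditions are regular, i.e. J_{14}·J_{23} ≠ 0, and let z0, z1 ∈ ℂ be the two roots (listed with multiplicity) of the quadratic equation J_{23}·z² − (J_{12}+J_{34})·z − J_{14} = 0. Then z0 ≠ 0, z1 ≠ 0, and the set of eigenvalues of L_{0,U} equals { −(i/π)·log z0 + 2n : n ∈ ℤ } ∪ { −(i/π)·log z1 + 2n : n ∈ ℤ }, where log denotes the branch of the logarithm with imaginary part in (−π, π]. -/

import Mathlib

/-! For `Q = 0` the system `B y' = λ y` decouples into `y₁' = iλ y₁`, `y₂' = -iλ y₂`, so every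
absolutely continuous solution is `y x = diag(e^{iλx}, e^{-iλx}) y 0`, and `λ` is an eigenvalue iff
`Δ₀(λ) = det (C + D diag(e^{iλπ}, e^{-iλπ})) = 0`. Expanding this determinant in the minors `J_{ij}`
and multiplying by `-e^{iλπ}` turns `Δ₀(λ) = 0` into the quadratic equation for `z = e^{iλπ}`,
whose roots are nonzero because their product is `-J₁₄ / J₂₃`. Finally `e^{iλπ} = zₖ` is solved
with the principal logarithm. -/

open MeasureTheory Complex Filter Finset Set
open scoped ENNReal

noncomputable section

/-- The columns of the 2×4 matrix 𝒰 = (C, D). -/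
def ucol (C D : Matrix (Fin 2) (Fin 2) ℂ) : Fin 4 → Fin 2 → ℂ :=
  ![fun r => C r 0, fun r => C r 1, fun r => D r 0, fun r => D r 1]

/-- `Jdet C D i j` : the determinant of the 2×2 matrix formed by columns `i` and `j`
of the 2×4 matrix 𝒰 = (C, D). -/
def Jdet (C D : Matrix (Fin 2) (Fin 2) ℂ) (i j : Fin 4) : ℂ :=
  ucol C D i 0 * ucol C D j 1 - ucol C D i 1 * ucol C D j 0

/-- The rows of 𝒰 = (C, D) are linearly independent. -/
def RowsIndep (C D : Matrix (Fin 2) (Fin 2) ℂ) : Prop :=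
  LinearIndependent ℂ ![fun j => ucol C D j 0, fun j => ucol C D j 1]

/-- The characteristic determinant Δ₀(λ) = det (C + D·diag(e^{iλπ}, e^{-iλπ})). -/
def Delta0 (C D : Matrix (Fin 2) (Fin 2) ℂ) (lam : ℂ) : ℂ :=
  (C + D * !![Complex.exp (I * lam * (Real.pi : ℂ)), 0; 0,
      Complex.exp (-(I * lam * (Real.pi : ℂ)))]).det

/-- The matrix B = diag(-i, i). -/
def Bmat : Matrix (Fin 2) (Fin 2) ℂ := !![-I, 0; 0, I]

/-- The restriction of Lebesgue measure to [0, π]. -/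
def mes : MeasureTheory.Measure ℝ := volume.restrict (Set.Icc (0 : ℝ) Real.pi)

/-- `IsAC y g` : y is absolutely continuous on [0,π] with a.e. derivative g
(i.e. g is integrable on [0,π] and y is the indefinite integral of g there). -/
def IsAC (y g : ℝ → Fin 2 → ℂ) : Prop :=
  (∀ i, IntervalIntegrable (fun t => g t i) volume 0 Real.pi) ∧
  ∀ x ∈ Set.Icc (0 : ℝ) Real.pi, y x = y 0 + fun i => ∫ t in (0 : ℝ)..x, g t i

/-- λ is an eigenvalue of the Dirac operator L_{Q,U}, where U(y) = C·y(0) + D·y(π),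
with eigenfunction y : y is nonzero on [0,π], absolutely continuous, satisfies
B·y′(x) + Q(x)·y(x) = λ·y(x) for a.e. x ∈ [0,π], and U(y) = 0. -/
def IsEigenpair (C D : Matrix (Fin 2) (Fin 2) ℂ) (Q : ℝ → Matrix (Fin 2) (Fin 2) ℂ)
    (lam : ℂ) (y : ℝ → Fin 2 → ℂ) : Prop :=
  (∃ x ∈ Set.Icc (0 : ℝ) Real.pi, y x ≠ 0) ∧
  ∃ g, IsAC y g ∧
    (∀ᵐ x ∂mes, Bmat.mulVec (g x) + (Q x).mulVec (y x) = lam • y x) ∧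
    C.mulVec (y 0) + D.mulVec (y Real.pi) = 0

open Matrix Real
open scoped Topology

lemma det_add_mul_diagonal (C D : Matrix (Fin 2) (Fin 2) ℂ) (z w : ℂ) :
    (C + D * diagonal ![z, w]).det =
      Jdet C D 0 1 + Jdet C D 2 3 * (z * w) + Jdet C D 0 3 * w - Jdet C D 1 2 * z := by
  simp only [det_fin_two, Matrix.add_apply, mul_diagonal, Jdet, ucol, cons_val_zero,
    cons_val_one, Matrix.cons_val]
  ring

lemma Bmat_mulVec_eq_smul_iff (u v : Fin 2 → ℂ) (lam : ℂ) :
    Bmat *ᵥ u = lam • v ↔ u 0 = I * lam * v 0 ∧ u 1 = -(I * lam) * v 1 := by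
  simp only [Bmat, ← diagonal_vec2, funext_iff, Fin.forall_fin_two, mulVec_diagonal,
    Pi.smul_apply, smul_eq_mul, cons_val_zero, cons_val_one]
  constructor <;> rintro ⟨h0, h1⟩ <;> constructor
  · linear_combination I * h0 + u 0 * I_sq
  · linear_combination (-I) * h1 + u 1 * I_sq
  · linear_combination (-I) * h0 - lam * v 0 * I_sq
  · linear_combination I * h1 - lam * v 1 * I_sq

lemma hasDerivAt_cexp_mul (c : ℂ) (t : ℝ) :
    HasDerivAt (fun s : ℝ => cexp (c * s)) (cexp (c * t) * c) t := by
  refine (((hasDerivAt_id (t : ℂ)).const_mul c).cexp).comp_ofReal.congr_deriv ?_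
  simp only [id, mul_one]

lemma integral_cexp_mul_mul (c v : ℂ) (x : ℝ) :
    ∫ t in (0 : ℝ)..x, cexp (c * t) * (c * v) = cexp (c * x) * v - v := by
  rw [intervalIntegral.integral_eq_sub_of_hasDerivAt
    (fun t _ => ((hasDerivAt_cexp_mul c t).mul_const v).congr_deriv (mul_assoc _ _ _))
    (by apply Continuous.intervalIntegrable; fun_prop)]
  simp

lemma eq_mul_cexp_of_eq_add_integral {f : ℝ → ℂ} {a c : ℂ} {b : ℝ} (hb : 0 ≤ b)
    (hf : ContinuousOn f (Icc 0 b))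
    (heq : ∀ x ∈ Icc 0 b, f x = a + c * ∫ t in (0 : ℝ)..x, f t) :
    ∀ x ∈ Icc 0 b, f x = a * cexp (c * x) := by
  set F : ℝ → ℂ := fun x => ∫ t in (0 : ℝ)..x, f t
  have hF : ContinuousOn F (Icc 0 b) := by
    simpa only [uIcc_of_le hb] using intervalIntegral.continuousOn_primitive_interval
      (μ := volume) (a := 0) (b := b) (by simpa only [uIcc_of_le hb] using hf.integrableOn_Icc)
  -- integrating factor: `e^{-cx} (a + c F x)` has right derivative `0`
  have hconst := constant_of_has_deriv_right_zero (f := fun x => cexp (-c * x) * (a + c * F x))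
    (by fun_prop) fun x hx => by
      have hmem : Icc 0 b ∈ 𝓝[>] x := Icc_mem_nhdsGT_of_mem hx
      have hFx : HasDerivWithinAt F (f x) (Ici x) x :=
        intervalIntegral.integral_hasDerivWithinAt_right
          ((hf.mono (Icc_subset_Icc le_rfl hx.2.le)).intervalIntegrable_of_Icc hx.1)
          ⟨_, hmem, hf.aestronglyMeasurable measurableSet_Icc⟩
          ((hf x (Ico_subset_Icc_self hx)).mono_of_mem_nhdsWithin hmem)
      refine ((hasDerivAt_cexp_mul (-c) x).hasDerivWithinAt.mul
        ((hFx.const_mul c).const_add a)).congr_deriv ?_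
      rw [heq x (Ico_subset_Icc_self hx)]
      ring
  intro x hx
  have hx' := hconst x hx
  simp only [F, intervalIntegral.integral_same, mul_zero, add_zero, ofReal_zero, Complex.exp_zero,
    one_mul] at hx'
  have hexp : cexp (c * x) * cexp (-c * x) = 1 := by rw [← Complex.exp_add]; simp
  rw [heq x hx]
  linear_combination cexp (c * x) * hx' - (a + c * F x) * hexp

lemma IsAC.continuousOn_apply {y g : ℝ → Fin 2 → ℂ} (hy : IsAC y g) (i : Fin 2) :
    ContinuousOn (fun x => y x i) (Icc 0 π) := by
  have hprim := intervalIntegral.continuousOn_primitive_interval (μ := volume) (a := 0) (b := π)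
    (f := fun t => g t i)
    (by simpa only [uIcc_of_le pi_pos.le] using
      (intervalIntegrable_iff_integrableOn_Icc_of_le pi_pos.le).1 (hy.1 i))
  rw [uIcc_of_le pi_pos.le] at hprim
  refine ((continuousOn_const (c := y 0 i)).add hprim).congr fun x hx => ?_
  simpa using congrFun (hy.2 x hx) i

lemma IsAC.apply_eq_mul_cexp {y g : ℝ → Fin 2 → ℂ} (hy : IsAC y g) {i : Fin 2} {c : ℂ}
    (hg : ∀ᵐ t ∂mes, g t i = c * y t i) :
    ∀ x ∈ Set.Icc 0 π, y x i = y 0 i * cexp (c * x) := by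
  refine eq_mul_cexp_of_eq_add_integral pi_pos.le (hy.continuousOn_apply i) fun x hx => ?_
  rw [← intervalIntegral.integral_const_mul]
  have hg' : ∀ᵐ t, t ∈ uIoc 0 x → g t i = c * y t i := by
    filter_upwards [(ae_restrict_iff' measurableSet_Icc).1 hg] with t ht htx
    rw [uIoc_of_le hx.1] at htx
    exact ht ⟨htx.1.le, htx.2.trans hx.2⟩
  simpa [intervalIntegral.integral_congr_ae hg'] using congrFun (hy.2 x hx) i

def freeDiracFundamental (lam : ℂ) (x : ℝ) : Matrix (Fin 2) (Fin 2) ℂ :=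
  diagonal ![cexp (I * lam * x), cexp (-(I * lam * x))]

lemma Delta0_eq_det (C D : Matrix (Fin 2) (Fin 2) ℂ) (lam : ℂ) :
    Delta0 C D lam = (C + D * freeDiracFundamental lam π).det := by
  rw [freeDiracFundamental, diagonal_vec2]
  rfl

lemma freeDiracFundamental_zero (lam : ℂ) : freeDiracFundamental lam 0 = 1 := by
  ext i j
  fin_cases i <;> fin_cases j <;> simp [freeDiracFundamental]

lemma freeDiracFundamental_mulVec_apply_zero (lam : ℂ) (x : ℝ) (v : Fin 2 → ℂ) :
    (freeDiracFundamental lam x *ᵥ v) 0 = cexp (I * lam * x) * v 0 := by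
  simp [freeDiracFundamental, mulVec_diagonal]

lemma freeDiracFundamental_mulVec_apply_one (lam : ℂ) (x : ℝ) (v : Fin 2 → ℂ) :
    (freeDiracFundamental lam x *ᵥ v) 1 = cexp (-(I * lam) * x) * v 1 := by
  simp [freeDiracFundamental, mulVec_diagonal]

lemma IsAC.eq_freeDiracFundamental_mulVec {y g : ℝ → Fin 2 → ℂ} {lam : ℂ} (hy : IsAC y g)
    (hode : ∀ᵐ x ∂mes, Bmat *ᵥ g x = lam • y x) :
    ∀ x ∈ Set.Icc 0 π, y x = freeDiracFundamental lam x *ᵥ y 0 := by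
  have hcomp := hode.mono fun t ht => (Bmat_mulVec_eq_smul_iff _ _ _).1 ht
  intro x hx
  ext i
  fin_cases i
  · rw [Fin.zero_eta, freeDiracFundamental_mulVec_apply_zero,
      hy.apply_eq_mul_cexp (hcomp.mono fun _ ht => ht.1) x hx, mul_comm]
  · rw [Fin.mk_one, freeDiracFundamental_mulVec_apply_one,
      hy.apply_eq_mul_cexp (hcomp.mono fun _ ht => ht.2) x hx, mul_comm]

lemma isAC_freeDiracFundamental_mulVec (lam : ℂ) (v : Fin 2 → ℂ) :
    IsAC (fun x => freeDiracFundamental lam x *ᵥ v)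
      (fun x => freeDiracFundamental lam x *ᵥ ![I * lam * v 0, -(I * lam) * v 1]) := by
  refine ⟨fun i => Continuous.intervalIntegrable ?_ _ _, fun x _ => ?_⟩
  · fin_cases i
    · simp only [Fin.zero_eta, freeDiracFundamental_mulVec_apply_zero]
      fun_prop
    · simp only [Fin.mk_one, freeDiracFundamental_mulVec_apply_one]
      fun_prop
  · ext i
    fin_cases i
    · simp only [Fin.zero_eta, Pi.add_apply, freeDiracFundamental_mulVec_apply_zero,
        cons_val_zero, integral_cexp_mul_mul]
      simp
    · simp only [Fin.mk_one, Pi.add_apply, freeDiracFundamental_mulVec_apply_one,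
        cons_val_one, cons_val_zero, integral_cexp_mul_mul]
      simp

lemma isEigenpair_freeDiracFundamental_mulVec {C D : Matrix (Fin 2) (Fin 2) ℂ} {lam : ℂ}
    {v : Fin 2 → ℂ} (hv : v ≠ 0) (hbc : (C + D * freeDiracFundamental lam π) *ᵥ v = 0) :
    IsEigenpair C D (fun _ => 0) lam (fun x => freeDiracFundamental lam x *ᵥ v) := by
  refine ⟨⟨0, ⟨le_rfl, pi_pos.le⟩, by simpa [freeDiracFundamental_zero] using hv⟩, _,
    isAC_freeDiracFundamental_mulVec lam v, .of_forall fun x => ?_, ?_⟩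
  · rw [zero_mulVec, add_zero, Bmat_mulVec_eq_smul_iff]
    simp only [freeDiracFundamental_mulVec_apply_zero, freeDiracFundamental_mulVec_apply_one,
      cons_val_zero, cons_val_one]
    constructor <;> ring
  · beta_reduce
    rw [freeDiracFundamental_zero, one_mulVec, mulVec_mulVec, ← add_mulVec, hbc]

theorem exists_isEigenpair_zero_iff (C D : Matrix (Fin 2) (Fin 2) ℂ) (lam : ℂ) :
    (∃ y, IsEigenpair C D (fun _ => 0) lam y) ↔ Delta0 C D lam = 0 := by
  rw [Delta0_eq_det, ← exists_mulVec_eq_zero_iff]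
  constructor
  · rintro ⟨y, ⟨x₀, hx₀, hyx₀⟩, g, hy, hode, hbc⟩
    have hsol := hy.eq_freeDiracFundamental_mulVec (hode.mono fun x hx => by simpa using hx)
    refine ⟨y 0, fun h0 => hyx₀ ?_, ?_⟩
    · rw [hsol x₀ hx₀, h0, mulVec_zero]
    · rw [add_mulVec, ← mulVec_mulVec, ← hsol π ⟨pi_pos.le, le_rfl⟩, hbc]
  · rintro ⟨v, hv, hbc⟩
    exact ⟨_, isEigenpair_freeDiracFundamental_mulVec hv hbc⟩

lemma neg_cexp_mul_Delta0 (C D : Matrix (Fin 2) (Fin 2) ℂ) (lam : ℂ) :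
    -cexp (I * lam * π) * Delta0 C D lam =
      Jdet C D 1 2 * cexp (I * lam * π) ^ 2 - (Jdet C D 0 1 + Jdet C D 2 3) * cexp (I * lam * π)
        - Jdet C D 0 3 := by
  have hinv : cexp (I * lam * π) * cexp (-(I * lam * π)) = 1 := by
    rw [← Complex.exp_add, add_neg_cancel, Complex.exp_zero]
  rw [Delta0_eq_det, freeDiracFundamental, det_add_mul_diagonal]
  linear_combination -(Jdet C D 2 3 * cexp (I * lam * π) + Jdet C D 0 3) * hinv

lemma Delta0_eq_zero_iff {C D : Matrix (Fin 2) (Fin 2) ℂ} {z0 z1 : ℂ} (hJ : Jdet C D 1 2 ≠ 0)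
    (hroots : ∀ z : ℂ,
      Jdet C D 1 2 * z ^ 2 - (Jdet C D 0 1 + Jdet C D 2 3) * z - Jdet C D 0 3 =
        Jdet C D 1 2 * (z - z0) * (z - z1)) (lam : ℂ) :
    Delta0 C D lam = 0 ↔ cexp (I * lam * π) = z0 ∨ cexp (I * lam * π) = z1 := by
  rw [← mul_right_inj' (neg_ne_zero.2 (Complex.exp_ne_zero (I * lam * π))), mul_zero,
    neg_cexp_mul_Delta0, hroots, mul_assoc, mul_eq_zero, or_iff_right hJ, mul_eq_zero,
    sub_eq_zero, sub_eq_zero]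

lemma cexp_I_mul_mul_pi_eq_iff {u : ℂ} (hu : u ≠ 0) (lam : ℂ) :
    cexp (I * lam * π) = u ↔ ∃ n : ℤ, lam = -(I / π) * log u + 2 * n := by
  rw [← exp_log hu, Complex.exp_eq_exp_iff_exists_int, exp_log hu]
  refine exists_congr fun n => ⟨fun h => ?_, fun h => ?_⟩
  · field_simp
    linear_combination (-I) * h + (lam * π - 2 * π * n) * I_sq
  · rw [h]
    field_simp
    linear_combination (-log u) * I_sq

theorem spectrum_free_dirac_general (C D : Matrix (Fin 2) (Fin 2) ℂ)
    (hreg : Jdet C D 0 3 * Jdet C D 1 2 ≠ 0) (z0 z1 : ℂ)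
    (hroots : ∀ z : ℂ,
      Jdet C D 1 2 * z ^ 2 - (Jdet C D 0 1 + Jdet C D 2 3) * z - Jdet C D 0 3 =
        Jdet C D 1 2 * (z - z0) * (z - z1)) :
    z0 ≠ 0 ∧ z1 ≠ 0 ∧
      {lam : ℂ | ∃ y : ℝ → Fin 2 → ℂ, IsEigenpair C D (fun _ => 0) lam y} =
        {lam : ℂ | ∃ n : ℤ, lam = -(I / (Real.pi : ℂ)) * Complex.log z0 + 2 * (n : ℂ)} ∪
        {lam : ℂ | ∃ n : ℤ, lam = -(I / (Real.pi : ℂ)) * Complex.log z1 + 2 * (n : ℂ)} := by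
  have hJ03 : Jdet C D 0 3 ≠ 0 := left_ne_zero_of_mul hreg
  have hprod : Jdet C D 1 2 * z0 * z1 = -Jdet C D 0 3 := by linear_combination -hroots 0
  have hz0 : z0 ≠ 0 := by
    rintro rfl
    exact hJ03 (by linear_combination hprod)
  have hz1 : z1 ≠ 0 := by
    rintro rfl
    exact hJ03 (by linear_combination hprod)
  refine ⟨hz0, hz1, Set.ext fun lam => ?_⟩
  rw [Set.mem_union, Set.mem_ofPred, Set.mem_ofPred, Set.mem_ofPred, exists_isEigenpair_zero_iff,
    Delta0_eq_zero_iff (right_ne_zero_of_mul hreg) hroots, cexp_I_mul_mul_pi_eq_iff hz0,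
    cexp_I_mul_mul_pi_eq_iff hz1]

/-- for regular boundary conditions (J₁₄·J₂₃ ≠ 0), if z₀, z₁ are the two
roots (with multiplicity) of J₂₃·z² − (J₁₂+J₃₄)·z − J₁₄ = 0, then z₀ ≠ 0, z₁ ≠ 0 and
the set of eigenvalues of L_{0,U} is
{ −(i/π)·log z₀ + 2n : n ∈ ℤ } ∪ { −(i/π)·log z₁ + 2n : n ∈ ℤ },
where log is the branch with imaginary part in (−π, π] (this is `Complex.log`). -/
theorem spectrum_free_dirac (C D : Matrix (Fin 2) (Fin 2) ℂ) (hU : RowsIndep C D)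
    (hreg : Jdet C D 0 3 * Jdet C D 1 2 ≠ 0) (z0 z1 : ℂ)
    (hroots : ∀ z : ℂ,
      Jdet C D 1 2 * z ^ 2 - (Jdet C D 0 1 + Jdet C D 2 3) * z - Jdet C D 0 3 =
        Jdet C D 1 2 * (z - z0) * (z - z1)) :
    z0 ≠ 0 ∧ z1 ≠ 0 ∧
      {lam : ℂ | ∃ y : ℝ → Fin 2 → ℂ, IsEigenpair C D (fun _ => 0) lam y} =
        {lam : ℂ | ∃ n : ℤ, lam = -(I / (Real.pi : ℂ)) * Complex.log z0 + 2 * (n : ℂ)} ∪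
        {lam : ℂ | ∃ n : ℤ, lam = -(I / (Real.pi : ℂ)) * Complex.log z1 + 2 * (n : ℂ)} :=
  spectrum_free_dirac_general C D hreg z0 z1 hroots

end
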